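/- Let g be a standard Gaussian and H(β) = e^{−β²/2} E[cosh(βg) log cosh(βg)]. Then H is continuous, strictly increasing on [0,∞), H(0) = 0, and H(β) → ∞ as β → ∞; consequently there is a unique β_cr > 0 with H(β_cr) = log 2, and H(β) ≤ log 2 iff β ≤ β_cr. -/

import Mathlib

/-!
Write `Z(β) = E[cosh(βg) log cosh(βg)]`, so that `H(β) = e^{-β²/2} Z(β)`. Differentiating under
the integral and applying Stein's lemma `E[g f(g)] = E[f'(g)]` to
`f(x) = sinh(βx)(log cosh(βx) + 1)` gives `Z'(β) = β (Z(β) + E[cosh(βg) + sinh²(βg)/cosh(βg)])`,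
hence `H'(β) = β e^{-β²/2} E[cosh(βg) + sinh²(βg)/cosh(βg)] ≥ β e^{-β²/2} E[cosh(βg)] = β`.
So `H` is strictly increasing on `[0, ∞)` and `H(β) ≥ β²/2`; since `H(0) = 0 < log 2`, the
intermediate value theorem gives the unique crossing point `β_cr`.
-/

open MeasureTheory ProbabilityTheory Filter Set Real
open scoped NNReal

namespace Real

lemma abs_le_exp_abs (x : ℝ) : |x| ≤ exp |x| :=
  (le_add_of_nonneg_right zero_le_one).trans (add_one_le_exp _)

lemma cosh_le_exp_abs (y : ℝ) : cosh y ≤ exp |y| := by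
  rw [← cosh_abs, ← cosh_add_sinh |y|]
  exact le_add_of_nonneg_right (sinh_nonneg_iff.2 (abs_nonneg y))

lemma abs_sinh_le_exp_abs (y : ℝ) : |sinh y| ≤ exp |y| := by
  rw [abs_sinh]
  exact (sinh_lt_cosh _).le.trans (by simpa using cosh_le_exp_abs |y|)

lemma log_cosh_nonneg (y : ℝ) : 0 ≤ log (cosh y) :=
  log_nonneg (one_le_cosh y)

lemma log_cosh_add_one_le_exp_abs (y : ℝ) : log (cosh y) + 1 ≤ exp |y| :=
  calc log (cosh y) + 1 ≤ |y| + 1 := by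
        gcongr
        exact (log_le_log (cosh_pos y) (cosh_le_exp_abs y)).trans_eq (log_exp _)
    _ ≤ exp |y| := add_one_le_exp _

lemma sinh_sq_div_cosh_le_cosh (y : ℝ) : sinh y ^ 2 / cosh y ≤ cosh y := by
  rw [div_le_iff₀ (cosh_pos y), ← sq, cosh_sq]
  linarith

lemma hasDerivAt_cosh_mul_log_cosh (y : ℝ) :
    HasDerivAt (fun y => cosh y * log (cosh y)) (sinh y * (log (cosh y) + 1)) y := by
  refine ((hasDerivAt_cosh y).mul ((hasDerivAt_cosh y).log (cosh_pos y).ne')).congr_deriv ?_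
  field_simp [(cosh_pos y).ne']

lemma hasDerivAt_sinh_mul_log_cosh_add_one (y : ℝ) :
    HasDerivAt (fun y => sinh y * (log (cosh y) + 1))
      (cosh y * log (cosh y) + (cosh y + sinh y ^ 2 / cosh y)) y := by
  refine ((hasDerivAt_sinh y).mul
    (((hasDerivAt_cosh y).log (cosh_pos y).ne').add_const 1)).congr_deriv ?_
  field_simp [(cosh_pos y).ne']
  ring

lemma abs_cosh_mul_log_cosh_le (y : ℝ) : |cosh y * log (cosh y)| ≤ 1 * exp (2 * |y|) := by
  rw [abs_of_nonneg (mul_nonneg (cosh_pos y).le (log_cosh_nonneg y)), one_mul, two_mul, exp_add]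
  exact mul_le_mul (cosh_le_exp_abs y) (by linarith [log_cosh_add_one_le_exp_abs y])
    (log_cosh_nonneg y) (exp_pos _).le

lemma abs_sinh_mul_log_cosh_add_one_le (y : ℝ) :
    |sinh y * (log (cosh y) + 1)| ≤ 1 * exp (2 * |y|) := by
  rw [abs_mul, abs_of_nonneg (by linarith [log_cosh_nonneg y] : 0 ≤ log (cosh y) + 1), one_mul,
    two_mul, exp_add]
  exact mul_le_mul (abs_sinh_le_exp_abs y) (log_cosh_add_one_le_exp_abs y)
    (by linarith [log_cosh_nonneg y]) (exp_pos _).le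

lemma abs_cosh_add_sinh_sq_div_cosh_le (y : ℝ) :
    |cosh y + sinh y ^ 2 / cosh y| ≤ 2 * exp (1 * |y|) := by
  have h := sinh_sq_div_cosh_le_cosh y
  rw [abs_of_nonneg (by positivity), one_mul]
  linarith [cosh_le_exp_abs y]

end Real

namespace ProbabilityTheory

variable {μ : ℝ} {v : ℝ≥0}

lemma integrable_gaussianReal_iff_integrable_pdf_mul (hv : v ≠ 0) {f : ℝ → ℝ} :
    Integrable f (gaussianReal μ v) ↔ Integrable (fun x => gaussianPDFReal μ v x * f x) := by
  rw [gaussianReal_of_var_ne_zero _ hv, integrable_withDensity_iff_integrable_smul'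
    (measurable_gaussianPDF _ _) (ae_of_all _ fun _ => gaussianPDF_lt_top)]
  simp only [toReal_gaussianPDF, smul_eq_mul]

lemma integrable_gaussianReal_of_abs_le_exp {f : ℝ → ℝ}
    (hf : AEStronglyMeasurable f (gaussianReal μ v)) {C c : ℝ}
    (h : ∀ x, |f x| ≤ C * exp (c * |x|)) : Integrable f (gaussianReal μ v) :=
  ((integrable_exp_mul_abs (X := id) (integrable_exp_mul_gaussianReal c)
    (integrable_exp_mul_gaussianReal (-c))).const_mul C).mono' hf (ae_of_all _ h)

lemma integrable_comp_mul_gaussianReal {g : ℝ → ℝ} (hg : Measurable g) {C c : ℝ}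
    (h : ∀ y, |g y| ≤ C * exp (c * |y|)) (β : ℝ) :
    Integrable (fun x => g (β * x)) (gaussianReal μ v) :=
  integrable_gaussianReal_of_abs_le_exp (C := C) (c := c * |β|)
    (hg.comp (measurable_id.const_mul β)).aestronglyMeasurable fun x =>
    (h (β * x)).trans_eq (by rw [abs_mul, mul_assoc])

lemma hasDerivAt_gaussianPDFReal (x : ℝ) :
    HasDerivAt (gaussianPDFReal μ v) (-(x - μ) / v * gaussianPDFReal μ v x) x := by
  rw [gaussianPDFReal_def]
  refine ((((hasDerivAt_id x).sub_const μ).pow 2).neg.div_const (2 * v : ℝ)).exp.const_mul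
    _ |>.congr_deriv ?_
  simp only [id, Pi.pow_apply, Pi.neg_apply]
  ring

/-- Stein's lemma (Gaussian integration by parts). -/
theorem integral_sub_mul_eq_integral_deriv_gaussianReal {f f' : ℝ → ℝ}
    (hf : ∀ x, HasDerivAt f (f' x) x) (hf_int : Integrable f (gaussianReal μ v))
    (hxf_int : Integrable (fun x => (x - μ) * f x) (gaussianReal μ v))
    (hf'_int : Integrable f' (gaussianReal μ v)) :
    ∫ x, (x - μ) * f x ∂gaussianReal μ v = v * ∫ x, f' x ∂gaussianReal μ v := by
  rcases eq_or_ne v 0 with rfl | hv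
  · simp [gaussianReal_zero_var]
  have hpdf {g : ℝ → ℝ} := (integrable_gaussianReal_iff_integrable_pdf_mul (μ := μ) hv (f := g)).1
  have hparts := integral_mul_deriv_eq_deriv_mul_of_integrable
    (fun x _ => hasDerivAt_gaussianPDFReal (μ := μ) (v := v) x) (fun x _ => hf x) (hpdf hf'_int)
    (((hpdf hxf_int).const_mul (-(v : ℝ)⁻¹)).congr
      (ae_of_all _ fun x => by simp only [Pi.mul_apply]; ring))
    (hpdf hf_int)
  have hv' : (v : ℝ) ≠ 0 := NNReal.coe_ne_zero.2 hv
  simp only [integral_gaussianReal_eq_integral_smul hv, smul_eq_mul]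
  rw [hparts, ← integral_neg, ← integral_const_mul]
  congr 1 with x
  field_simp

lemma integral_cosh_mul_gaussianReal (v : ℝ≥0) (t : ℝ) :
    ∫ x, cosh (t * x) ∂gaussianReal 0 v = exp (v * t ^ 2 / 2) := by
  have hmgf (s : ℝ) : ∫ x, exp (s * x) ∂gaussianReal 0 v = exp (v * s ^ 2 / 2) := by
    simpa [mgf] using congrFun (mgf_fun_id_gaussianReal (μ := 0) (v := v)) s
  simp_rw [cosh_eq, ← neg_mul]
  rw [integral_div, integral_add (integrable_exp_mul_gaussianReal t)
    (integrable_exp_mul_gaussianReal (-t)), hmgf, hmgf, neg_sq, add_self_div_two]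

end ProbabilityTheory

lemma exists_crossing_of_strictMonoOn_Ici {f : ℝ → ℝ} {a c : ℝ} (hf : ContinuousOn f (Ici a))
    (hmono : StrictMonoOn f (Ici a)) (ha : f a < c) (htop : Tendsto f atTop atTop) :
    ∃ b, a < b ∧ f b = c ∧ (∀ β ∈ Ici a, f β ≤ c ↔ β ≤ b) ∧
      ∀ b', a < b' → f b' = c → b' = b := by
  obtain ⟨B, hcB, haB⟩ := ((htop.eventually_ge_atTop c).and (eventually_ge_atTop a)).exists
  obtain ⟨b, hb, hfb⟩ := intermediate_value_Icc haB (hf.mono Icc_subset_Ici_self) ⟨ha.le, hcB⟩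
  have hab : a < b := hb.1.lt_of_ne (by rintro rfl; exact ha.ne hfb)
  refine ⟨b, hab, hfb, fun β hβ => hfb ▸ hmono.le_iff_le hβ hb.1, fun b' hab' hfb' => ?_⟩
  exact hmono.injOn (mem_Ici.2 hab'.le) hb.1 (hfb'.trans hfb.symm)

noncomputable def cavityH (β : ℝ) : ℝ :=
  exp (-β ^ 2 / 2) * ∫ x, cosh (β * x) * log (cosh (β * x)) ∂gaussianReal 0 1

lemma hasDerivAt_integral_cosh_mul_log_cosh (β : ℝ) :
    Integrable (fun x => x * (sinh (β * x) * (log (cosh (β * x)) + 1))) (gaussianReal 0 1) ∧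
    HasDerivAt (fun b => ∫ x, cosh (b * x) * log (cosh (b * x)) ∂gaussianReal 0 1)
      (∫ x, x * (sinh (β * x) * (log (cosh (β * x)) + 1)) ∂gaussianReal 0 1) β := by
  refine hasDerivAt_integral_of_dominated_loc_of_deriv_le (μ := gaussianReal 0 1)
    (F := fun b x => cosh (b * x) * log (cosh (b * x)))
    (F' := fun b x => x * (sinh (b * x) * (log (cosh (b * x)) + 1)))
    (bound := fun x => exp ((2 * |β| + 3) * |x|)) (Metric.ball_mem_nhds β one_pos)
    (Eventually.of_forall fun b => by fun_prop)
    (integrable_comp_mul_gaussianReal (by fun_prop) abs_cosh_mul_log_cosh_le β) (by fun_prop)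
    (ae_of_all _ fun x b hb => ?_)
    (integrable_gaussianReal_of_abs_le_exp (C := 1) (by fun_prop) fun x => by
      rw [abs_of_pos (exp_pos _), one_mul])
    (ae_of_all _ fun x b _ => ?_)
  · have hb' : |b| ≤ |β| + 1 := by
      have := abs_sub_abs_le_abs_sub b β
      rw [Metric.mem_ball, Real.dist_eq] at hb
      linarith
    have hψ := abs_sinh_mul_log_cosh_add_one_le (b * x)
    rw [one_mul, abs_mul b x] at hψ
    rw [Real.norm_eq_abs, abs_mul]
    calc |x| * |sinh (b * x) * (log (cosh (b * x)) + 1)|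
        ≤ exp |x| * exp (2 * (|b| * |x|)) :=
          mul_le_mul (abs_le_exp_abs x) hψ (abs_nonneg _) (exp_pos _).le
      _ ≤ exp ((2 * |β| + 3) * |x|) := by
          rw [← exp_add]
          gcongr
          nlinarith [abs_nonneg x]
  · exact ((hasDerivAt_cosh_mul_log_cosh (b * x)).comp b (hasDerivAt_mul_const x)).congr_deriv
      (mul_comm _ _)

lemma integral_mul_sinh_mul_log_cosh_add_one (β : ℝ) :
    ∫ x, x * (sinh (β * x) * (log (cosh (β * x)) + 1)) ∂gaussianReal 0 1 =
      β * ((∫ x, cosh (β * x) * log (cosh (β * x)) ∂gaussianReal 0 1) +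
        ∫ x, (cosh (β * x) + sinh (β * x) ^ 2 / cosh (β * x)) ∂gaussianReal 0 1) := by
  have hφ := integrable_comp_mul_gaussianReal (μ := 0) (v := 1) (by fun_prop)
    abs_cosh_mul_log_cosh_le β
  have hκ := integrable_comp_mul_gaussianReal (μ := 0) (v := 1) (by fun_prop)
    abs_cosh_add_sinh_sq_div_cosh_le β
  have hstein := integral_sub_mul_eq_integral_deriv_gaussianReal
    (fun x => ((hasDerivAt_sinh_mul_log_cosh_add_one (β * x)).comp x
      ((hasDerivAt_id x).const_mul β)))
    (integrable_comp_mul_gaussianReal (by fun_prop) abs_sinh_mul_log_cosh_add_one_le β)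
    (by simpa using (hasDerivAt_integral_cosh_mul_log_cosh β).1)
    ((hφ.add hκ).mul_const _)
  simp only [Function.comp_apply, sub_zero, NNReal.coe_one, one_mul, mul_one] at hstein
  rw [hstein, integral_mul_const, integral_add hφ hκ, mul_comm]

lemma hasDerivAt_cavityH (β : ℝ) :
    HasDerivAt cavityH (β * exp (-β ^ 2 / 2) *
      ∫ x, (cosh (β * x) + sinh (β * x) ^ 2 / cosh (β * x)) ∂gaussianReal 0 1) β := by
  have hexp : HasDerivAt (fun b : ℝ => exp (-b ^ 2 / 2)) (exp (-β ^ 2 / 2) * -β) β :=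
    ((hasDerivAt_pow 2 β).neg.div_const 2).exp.congr_deriv (by simp only [Pi.neg_apply]; ring)
  refine (hexp.mul (hasDerivAt_integral_cosh_mul_log_cosh β).2).congr_deriv ?_
  rw [integral_mul_sinh_mul_log_cosh_add_one]
  ring

lemma le_deriv_cavityH {β : ℝ} (hβ : 0 ≤ β) : β ≤ deriv cavityH β := by
  have hcosh_le : ∫ x, cosh (β * x) ∂gaussianReal 0 1 ≤
      ∫ x, (cosh (β * x) + sinh (β * x) ^ 2 / cosh (β * x)) ∂gaussianReal 0 1 :=
    integral_mono (integrable_comp_mul_gaussianReal (C := 1) (c := 1) (by fun_prop)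
        (fun y => by rw [abs_of_pos (cosh_pos y), one_mul, one_mul]; exact cosh_le_exp_abs y) β)
      (integrable_comp_mul_gaussianReal (by fun_prop) abs_cosh_add_sinh_sq_div_cosh_le β)
      fun x => le_add_of_nonneg_right (div_nonneg (sq_nonneg _) (cosh_pos _).le)
  rw [integral_cosh_mul_gaussianReal, NNReal.coe_one, one_mul] at hcosh_le
  rw [(hasDerivAt_cavityH β).deriv]
  calc β = β * exp (-β ^ 2 / 2) * exp (β ^ 2 / 2) := by
        rw [mul_assoc, ← exp_add, neg_div, neg_add_cancel, exp_zero, mul_one]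
    _ ≤ _ := by gcongr

lemma differentiable_cavityH : Differentiable ℝ cavityH :=
  fun β => (hasDerivAt_cavityH β).differentiableAt

lemma cavityH_zero : cavityH 0 = 0 := by
  simp [cavityH]

lemma strictMonoOn_cavityH : StrictMonoOn cavityH (Ici 0) :=
  strictMonoOn_of_deriv_pos (convex_Ici 0) differentiable_cavityH.continuous.continuousOn
    fun β hβ => by
      rw [interior_Ici] at hβ
      exact hβ.trans_le (le_deriv_cavityH hβ.le)

lemma sq_div_two_le_cavityH {β : ℝ} (hβ : 0 ≤ β) : β ^ 2 / 2 ≤ cavityH β := by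
  have hderiv (b : ℝ) : HasDerivAt (fun b => cavityH b - b ^ 2 / 2) (deriv cavityH b - b) b :=
    (differentiable_cavityH b).hasDerivAt.sub
      ((hasDerivAt_pow 2 b).div_const 2 |>.congr_deriv (by ring))
  have hmono : MonotoneOn (fun b => cavityH b - b ^ 2 / 2) (Ici 0) :=
    monotoneOn_of_deriv_nonneg (convex_Ici 0)
      (fun b _ => (hderiv b).continuousAt.continuousWithinAt)
      (fun b _ => (hderiv b).differentiableAt.differentiableWithinAt)
      fun b hb => by
        rw [interior_Ici] at hb
        rw [(hderiv b).deriv, sub_nonneg]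
        exact le_deriv_cavityH hb.le
  have hcomp := hmono self_mem_Ici hβ hβ
  simp only [cavityH_zero] at hcomp
  linarith

lemma tendsto_cavityH_atTop : Tendsto cavityH atTop atTop :=
  tendsto_atTop_mono' atTop ((eventually_ge_atTop 0).mono fun _ => sq_div_two_le_cavityH)
    ((tendsto_pow_atTop two_ne_zero).atTop_div_const two_pos)

theorem critical_temperature_REM_cavity
    (H : ℝ → ℝ)
    (hH : H = fun β => Real.exp (-β ^ 2 / 2) *
      ∫ x, Real.cosh (β * x) * Real.log (Real.cosh (β * x)) ∂(gaussianReal 0 1)) :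
    Continuous H ∧
    StrictMonoOn H (Ici (0 : ℝ)) ∧
    H 0 = 0 ∧
    Tendsto H atTop atTop ∧
    (∃ βcr : ℝ, 0 < βcr ∧ H βcr = Real.log 2 ∧
      (∀ β ∈ Ici (0 : ℝ), (H β ≤ Real.log 2 ↔ β ≤ βcr)) ∧
      ∀ βcr' : ℝ, 0 < βcr' → H βcr' = Real.log 2 → βcr' = βcr) := by
  obtain rfl : H = cavityH := hH
  have hcont := differentiable_cavityH.continuous
  refine ⟨hcont, strictMonoOn_cavityH, cavityH_zero, tendsto_cavityH_atTop, ?_⟩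
  exact exists_crossing_of_strictMonoOn_Ici hcont.continuousOn strictMonoOn_cavityH
    (by rw [cavityH_zero]; exact log_pos one_lt_two) tendsto_cavityH_atTop
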